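/- arXiv:1908.03525 — 2 statements merged into one kernel-verified Lean document; each statement's English description precedes it below -/
import Mathlib

section
/- Let G be a group and L a language of words over A ∪ A⁻¹ mapping onto G via μ. A subgroup H of G is L-quasi-convex (every L-representative of an element of H stays within distance δ of H in the Cayley graph, for some δ) if and only if the Stallings graph of H with respect to L — the subgraph of the Schreier graph Schreier(G,H) spanned by loops at the base vertex H labeled by words of L ∩ μ⁻¹(H) — has finitely many vertices. -/
variable {A : Type} [Finite A] [DecidableEq A] {G : Type} [Group G]

/-- Word length of `g ∈ G` with respect to the generating map `μ`. -/
noncomputable def wordLen (μ : FreeGroup A →* G) (g : G) : ℕ :=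
  sInf {n | ∃ l : List (A × Bool), l.length = n ∧ μ (FreeGroup.mk l) = g}

/-- Word metric on `G`. -/
noncomputable def wordDist (μ : FreeGroup A →* G) (g h : G) : ℕ :=
  wordLen μ (g⁻¹ * h)

/-- `H` is `L`-quasi-convex: some `δ` bounds the distance to `H` of every
prefix of every `L`-representative of an element of `H`. -/
def LQuasiConvex (μ : FreeGroup A →* G) (L : Set (FreeGroup A)) (H : Subgroup G) : Prop :=
  ∃ δ : ℕ, ∀ w ∈ L, (μ w ∈ H) → ∀ i : ℕ,
    ∃ h ∈ H, wordDist μ (μ (FreeGroup.mk (w.toWord.take i))) h ≤ δ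

/-- Vertex set of the Stallings graph of `H` w.r.t. `L`: the right cosets
`H·μ(u)` over all prefixes `u` of words in `L ∩ μ⁻¹(H)`. -/
def stallingsVertices (μ : FreeGroup A →* G) (L : Set (FreeGroup A))
    (H : Subgroup G) : Set (Set G) :=
  {s | ∃ w ∈ L, μ w ∈ H ∧ ∃ i : ℕ,
    s = (fun h => h * μ (FreeGroup.mk (w.toWord.take i))) '' (H : Set G)}

open MulOpposite Pointwise

/-!
A prefix `u` stays within distance `δ` of `H` exactly when the coset `H·μ(u)` contains an
element of length at most `δ`. So quasi-convexity says that every vertex of the Stallings graph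
is a coset meeting the `δ`-ball, and finitely many cosets do so once `δ` is the largest of
their minimal lengths. Conversely, a coset meeting the ball is determined by the element it
contains, and the ball is finite because `A` is.
-/

theorem image_mul_right_eq_of_mem {H : Subgroup G} {c g : G}
    (hg : g ∈ (· * c) '' (H : Set G)) : (· * c) '' (H : Set G) = (· * g) '' (H : Set G) := by
  obtain ⟨h, hh, rfl⟩ := hg
  change op c • (H : Set G) = op (h * c) • (H : Set G)
  rw [rightCoset_eq_iff]
  simpa [mul_assoc] using hh

theorem Set.Finite.exists_forall_exists_mem_le {α : Type*} {V : Set (Set α)} (hV : V.Finite)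
    (hne : ∀ s ∈ V, s.Nonempty) (f : α → ℕ) : ∃ δ, ∀ s ∈ V, ∃ g ∈ s, f g ≤ δ := by
  obtain ⟨δ, hδ⟩ := (hV.image fun s => sInf (f '' s)).bddAbove
  refine ⟨δ, fun s hs => ?_⟩
  obtain ⟨g, hg, hfg⟩ := Nat.sInf_mem ((hne s hs).image f)
  exact ⟨g, hg, hfg ▸ hδ ⟨s, hs, rfl⟩⟩

omit [Finite A] in
theorem exists_word_length_eq_wordLen {μ : FreeGroup A →* G} (hμ : Function.Surjective μ)
    (g : G) : ∃ l : List (A × Bool), l.length = wordLen μ g ∧ μ (FreeGroup.mk l) = g := by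
  obtain ⟨w, rfl⟩ := hμ g
  exact Nat.sInf_mem (⟨w.toWord.length, w.toWord, rfl, by rw [FreeGroup.mk_toWord]⟩ :
    ∃ n, ∃ l : List (A × Bool), l.length = n ∧ μ (FreeGroup.mk l) = μ w)

theorem finite_setOf_wordLen_le {μ : FreeGroup A →* G} (hμ : Function.Surjective μ) (n : ℕ) :
    {g | wordLen μ g ≤ n}.Finite := by
  refine ((List.finite_length_le (A × Bool) n).image fun l => μ (FreeGroup.mk l)).subset ?_
  intro g hg
  obtain ⟨l, hl, rfl⟩ := exists_word_length_eq_wordLen hμ g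
  exact ⟨l, hl.trans_le hg, rfl⟩

omit [Finite A] [DecidableEq A] in
theorem exists_mem_wordDist_le_iff (μ : FreeGroup A →* G) (H : Subgroup G) (u : G) (δ : ℕ) :
    (∃ h ∈ H, wordDist μ u h ≤ δ) ↔ ∃ g ∈ (· * u) '' (H : Set G), wordLen μ g⁻¹ ≤ δ := by
  constructor
  · rintro ⟨h, hh, hδ⟩
    exact ⟨h⁻¹ * u, ⟨h⁻¹, H.inv_mem hh, rfl⟩, by simpa [wordDist] using hδ⟩
  · rintro ⟨_, ⟨h, hh, rfl⟩, hδ⟩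
    exact ⟨h⁻¹, H.inv_mem hh, by simpa [wordDist] using hδ⟩

omit [Finite A] in
theorem lQuasiConvex_iff_exists_forall_exists_mem_le (μ : FreeGroup A →* G)
    (L : Set (FreeGroup A)) (H : Subgroup G) :
    LQuasiConvex μ L H ↔
      ∃ δ, ∀ s ∈ stallingsVertices μ L H, ∃ g ∈ s, wordLen μ g⁻¹ ≤ δ := by
  simp only [LQuasiConvex, stallingsVertices, exists_mem_wordDist_le_iff]
  refine exists_congr fun δ => ⟨?_, ?_⟩
  · rintro hδ _ ⟨w, hwL, hwH, i, rfl⟩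
    exact hδ w hwL hwH i
  · exact fun hδ w hwL hwH i => hδ _ ⟨w, hwL, hwH, i, rfl⟩

omit [Finite A] in
theorem stallingsVertices_subset_range (μ : FreeGroup A →* G) (L : Set (FreeGroup A))
    (H : Subgroup G) :
    stallingsVertices μ L H ⊆ Set.range fun c => (· * c) '' (H : Set G) := by
  rintro _ ⟨w, -, -, i, rfl⟩
  exact ⟨_, rfl⟩

theorem finite_of_forall_exists_mem_wordLen_le {μ : FreeGroup A →* G}
    (hμ : Function.Surjective μ) {H : Subgroup G} {V : Set (Set G)}
    (hV : V ⊆ Set.range fun c => (· * c) '' (H : Set G)) {δ : ℕ}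
    (hδ : ∀ s ∈ V, ∃ g ∈ s, wordLen μ g⁻¹ ≤ δ) : V.Finite := by
  have hball : {g : G | wordLen μ g⁻¹ ≤ δ}.Finite :=
    (finite_setOf_wordLen_le hμ δ).preimage inv_injective.injOn
  refine (hball.image fun g => (· * g) '' (H : Set G)).subset ?_
  intro s hs
  obtain ⟨c, rfl⟩ := hV hs
  obtain ⟨g, hg, hgδ⟩ := hδ _ hs
  exact ⟨g, hgδ, (image_mul_right_eq_of_mem hg).symm⟩

theorem stmt12_general (μ : FreeGroup A →* G) (hμ : Function.Surjective μ)
    (L : Set (FreeGroup A)) (H : Subgroup G) :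
    LQuasiConvex μ L H ↔ (stallingsVertices μ L H).Finite := by
  rw [lQuasiConvex_iff_exists_forall_exists_mem_le]
  constructor
  · rintro ⟨δ, hδ⟩
    exact finite_of_forall_exists_mem_wordLen_le hμ (stallingsVertices_subset_range μ L H) hδ
  · intro hfin
    refine hfin.exists_forall_exists_mem_le (fun s hs => ?_) _
    obtain ⟨c, rfl⟩ := stallingsVertices_subset_range μ L H hs
    exact ⟨1 * c, 1, H.one_mem, rfl⟩

/-- `H` is `L`-quasi-convex iff its Stallings graph with respect to `L` has
finitely many vertices. -/
theorem stmt12 (μ : FreeGroup A →* G) (hμ : Function.Surjective μ)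
    (L : Set (FreeGroup A)) (hL : μ '' L = Set.univ) (H : Subgroup G) :
    LQuasiConvex μ L H ↔ (stallingsVertices μ L H).Finite :=
  stmt12_general μ hμ L H
end

section
/- Let G be a group with finite generating set A and let H ≤ G. If H is quasi-convex with respect to the set of all geodesic words (i.e., there is δ such that every geodesic word representing an element of H stays δ-close to H in the Cayley graph), then H is finitely generated, with a generating set consisting of elements of word length at most 2δ + 1. -/
open Pointwise

variable {G : Type*} [Group G]

/-- Word length of `g` with respect to a generating set `A ⊆ G`: the minimal
length of a product of elements of `A ∪ A⁻¹` equal to `g`. -/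
noncomputable def wlen (A : Set G) (g : G) : ℕ :=
  sInf {n | ∃ l : List G, (∀ x ∈ l, x ∈ A ∪ A⁻¹) ∧ l.length = n ∧ l.prod = g}

/-- `H` is `δ`-quasi-convex w.r.t. geodesic words over `A`: for every `h ∈ H`
and every geodesic word `l` representing `h`, each prefix of `l` is within
distance `δ` of `H` in the word metric. -/
def GeodQuasiConvex (A : Set G) (H : Subgroup G) (δ : ℕ) : Prop :=
  ∀ h ∈ H, ∀ l : List G, (∀ x ∈ l, x ∈ A ∪ A⁻¹) → l.prod = h →
    l.length = wlen A h →
    ∀ i : ℕ, ∃ h' ∈ H, wlen A ((l.take i).prod⁻¹ * h') ≤ δ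

lemma wlen_le (A : Set G) {g : G} {l : List G} (hl : ∀ x ∈ l, x ∈ A ∪ A⁻¹)
    (hp : l.prod = g) : wlen A g ≤ l.length :=
  Nat.sInf_le ⟨l, hl, rfl, hp⟩

lemma wlen_exists (A : Set G) (hgen : Subgroup.closure A = ⊤) (g : G) :
    ∃ l : List G, (∀ x ∈ l, x ∈ A ∪ A⁻¹) ∧ l.prod = g ∧ l.length = wlen A g := by
  have hg : g ∈ Submonoid.closure (A ∪ A⁻¹) := by
    rw [← Subgroup.closure_toSubmonoid, hgen]; trivial
  obtain ⟨l, hl, hp⟩ := Submonoid.exists_list_of_mem_closure hg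
  have hne : {n | ∃ l : List G, (∀ x ∈ l, x ∈ A ∪ A⁻¹) ∧ l.length = n ∧ l.prod = g}.Nonempty :=
    ⟨l.length, l, hl, rfl, hp⟩
  obtain ⟨l', hl', hlen, hp'⟩ := Nat.sInf_mem hne
  exact ⟨l', hl', hp', hlen⟩

lemma wlen_one (A : Set G) : wlen A (1 : G) = 0 :=
  Nat.le_zero.mp (wlen_le A (l := []) (by simp) (by simp))

lemma wlen_mul_le (A : Set G) (hgen : Subgroup.closure A = ⊤) (g h : G) :
    wlen A (g * h) ≤ wlen A g + wlen A h := by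
  obtain ⟨l1, h1, p1, e1⟩ := wlen_exists A hgen g
  obtain ⟨l2, h2, p2, e2⟩ := wlen_exists A hgen h
  have := wlen_le A (g := g * h) (l := l1 ++ l2)
    (by intro x hx; rcases List.mem_append.mp hx with hx | hx; exacts [h1 x hx, h2 x hx])
    (by rw [List.prod_append, p1, p2])
  simpa [e1, e2] using this

lemma wlen_inv_le (A : Set G) (hgen : Subgroup.closure A = ⊤) (g : G) :
    wlen A g⁻¹ ≤ wlen A g := by
  obtain ⟨l, hl, hp, he⟩ := wlen_exists A hgen g
  have := wlen_le A (g := g⁻¹) (l := (l.map fun x => x⁻¹).reverse)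
    (by
      intro x hx
      simp only [List.mem_reverse, List.mem_map] at hx
      obtain ⟨y, hy, rfl⟩ := hx
      rcases hl y hy with h | h
      · exact Or.inr (by simpa using h)
      · exact Or.inl (by simpa using h))
    (by rw [← List.prod_inv_reverse, hp])
  simpa [he] using this

/-- A `δ`-quasi-convex subgroup of a finitely generated group is generated by
its elements of word length at most `2δ + 1`; in particular it is finitely
generated. -/
theorem stmt13 (A : Set G) (hA : A.Finite) (hgen : Subgroup.closure A = ⊤)
    (H : Subgroup G) (δ : ℕ) (hqc : GeodQuasiConvex A H δ) :
    H = Subgroup.closure {h : G | h ∈ H ∧ wlen A h ≤ 2 * δ + 1} ∧ H.FG := by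
  set S : Set G := {h : G | h ∈ H ∧ wlen A h ≤ 2 * δ + 1} with hS
  have hmain : H = Subgroup.closure S := by
    apply le_antisymm
    · intro h hh
      obtain ⟨l, hl, hp, he⟩ := wlen_exists A hgen h
      -- the choice function
      have hchoice : ∀ i, ∃ h' ∈ H, wlen A ((l.take i).prod⁻¹ * h') ≤ δ :=
        hqc h hh l hl hp he
      set n := l.length with hn
      classical
      set f : ℕ → G := fun i =>
        if i = 0 then 1 else if n ≤ i then h else (hchoice i).choose with hf
      have hfH : ∀ i, f i ∈ H ∧ wlen A ((l.take i).prod⁻¹ * f i) ≤ δ := by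
        intro i
        by_cases h0 : i = 0
        · subst h0
          simpa [hf, wlen_one] using H.one_mem
        · by_cases hni : n ≤ i
          · have : l.take i = l := List.take_of_length_le (by omega)
            simp only [hf, if_neg h0, if_pos hni, this, hp]
            simp [hh, wlen_one]
          · obtain ⟨hh', hw⟩ := (hchoice i).choose_spec
            simp only [hf, if_neg h0, if_neg hni]
            exact ⟨hh', hw⟩
      -- step bound
      have hstep : ∀ i, (f i)⁻¹ * f (i + 1) ∈ S := by
        intro i
        constructor
        · exact H.mul_mem (H.inv_mem (hfH i).1) (hfH (i + 1)).1
        · have key : (f i)⁻¹ * f (i + 1) =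
              ((l.take i).prod⁻¹ * f i)⁻¹ * ((l.take i).prod⁻¹ * (l.take (i + 1)).prod) *
                ((l.take (i + 1)).prod⁻¹ * f (i + 1)) := by
            group
          have hmid : wlen A ((l.take i).prod⁻¹ * (l.take (i + 1)).prod) ≤ 1 := by
            by_cases hni : i < n
            · have hni' : i < l.length := by omega
              have htake : l.take (i + 1) = l.take i ++ [l[i]] := by
                rw [List.take_succ]; simp [List.getElem?_eq_getElem hni']
              rw [htake, List.prod_append]
              simp only [List.prod_cons, List.prod_nil, mul_one, inv_mul_cancel_left]
              refine wlen_le A (l := [l[i]]) ?_ (by simp)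
              intro x hx
              simp only [List.mem_singleton] at hx
              subst hx
              exact hl _ (List.getElem_mem hni')
            · have : l.take (i + 1) = l.take i := by
                rw [List.take_of_length_le (by omega), List.take_of_length_le (by omega)]
              rw [this]
              simp [wlen_one]
          calc wlen A ((f i)⁻¹ * f (i + 1)) ≤
              wlen A (((l.take i).prod⁻¹ * f i)⁻¹ * ((l.take i).prod⁻¹ * (l.take (i + 1)).prod)) +
                wlen A ((l.take (i + 1)).prod⁻¹ * f (i + 1)) := by
                rw [key]; exact wlen_mul_le A hgen _ _
            _ ≤ wlen A (((l.take i).prod⁻¹ * f i)⁻¹) +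
                wlen A ((l.take i).prod⁻¹ * (l.take (i + 1)).prod) +
                wlen A ((l.take (i + 1)).prod⁻¹ * f (i + 1)) :=
                Nat.add_le_add_right (wlen_mul_le A hgen _ _) _
            _ ≤ δ + 1 + δ :=
                add_le_add (add_le_add
                  (le_trans (wlen_inv_le A hgen _) (hfH i).2) hmid) (hfH (i + 1)).2
            _ ≤ 2 * δ + 1 := by omega
      have hind : ∀ i, f i ∈ Subgroup.closure S := by
        intro i
        induction i with
        | zero => simpa [hf] using one_mem _
        | succ i ih =>
          have : f (i + 1) = f i * ((f i)⁻¹ * f (i + 1)) := by group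
          rw [this]
          exact mul_mem ih (Subgroup.subset_closure (hstep i))
      have hfn : f n = h := by
        by_cases h0 : n = 0
        · have : l = [] := List.length_eq_zero_iff.mp (by omega)
          simp only [hf, h0, if_pos]
          rw [← hp, this]; simp
        · simp [hf, h0]
      rw [← hfn]
      exact hind n
    · rw [Subgroup.closure_le]
      exact fun x hx => hx.1
  refine ⟨hmain, ?_⟩
  -- finiteness of S
  have hSfin : S.Finite := by
    have hfin : (A ∪ A⁻¹).Finite := hA.union hA.inv
    have hsub : S ⊆ List.prod '' ((fun l : List G => l) ''
        (List.map (Subtype.val) '' {l : List ↥(A ∪ A⁻¹) | l.length ≤ 2 * δ + 1})) := by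
      intro g hg
      obtain ⟨l, hl, hp, he⟩ := wlen_exists A hgen g
      refine ⟨l, ⟨l, ?_, rfl⟩, hp⟩
      refine ⟨l.attach.map fun x => ⟨x.1, hl x.1 x.2⟩, ?_, by simp⟩
      simp only [Set.mem_setOf_eq, List.length_map, List.length_attach]
      rw [he]
      exact hg.2
    refine Set.Finite.subset ?_ hsub
    have : Finite ↥(A ∪ A⁻¹) := hfin
    exact (((List.finite_length_le _ (2 * δ + 1)).image _).image _).image _
  rw [hmain]
  exact ⟨hSfin.toFinset, by simp⟩
end
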